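/- Let ω = Y₁ + Y₂ + ⋯ + Yₙ be the sum of the Dunkl operators. Then for every i ∈ {1,…,n}, [ω, m_{xᵢ}] = κ·id as endomorphisms of 𝔽[x₁,…,xₙ], and consequently [ω^p, m_{xᵢ}] = p·κ·ω^{p−1} for every integer p ≥ 1. -/

import Mathlib

open MvPolynomial

noncomputable section

variable (F : Type) [Field F] [CharZero F] {n : ℕ}

/-- The action of a permutation `w` on polynomials, permuting the variables. -/
def permOp (w : Equiv.Perm (Fin n)) : Module.End F (MvPolynomial (Fin n) F) :=
  (MvPolynomial.rename (⇑w)).toLinearMap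

/-- The operator exchanging the variables `xᵢ` and `xⱼ`. -/
def swapOp (i j : Fin n) : Module.End F (MvPolynomial (Fin n) F) :=
  permOp F (Equiv.swap i j)

theorem delta_existsUnique (i j : Fin n) (hij : i ≠ j) (f : MvPolynomial (Fin n) F) :
    ∃! g : MvPolynomial (Fin n) F,
      (X i - X j) * g = f - MvPolynomial.rename (⇑(Equiv.swap i j)) f := by
  have hne : (X i - X j : MvPolynomial (Fin n) F) ≠ 0 :=
    sub_ne_zero_of_ne (fun h => hij (MvPolynomial.X_injective h))
  have hex : ∃ g : MvPolynomial (Fin n) F,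
      (X i - X j) * g = f - MvPolynomial.rename (⇑(Equiv.swap i j)) f := by
    induction f using MvPolynomial.induction_on with
    | C a => exact ⟨0, by simp⟩
    | add p q hp hq =>
      obtain ⟨g1, h1⟩ := hp
      obtain ⟨g2, h2⟩ := hq
      exact ⟨g1 + g2, by rw [map_add]; linear_combination h1 + h2⟩
    | mul_X p k hp =>
      obtain ⟨g, hg⟩ := hp
      have hren : MvPolynomial.rename (⇑(Equiv.swap i j)) (p * X k) =
          MvPolynomial.rename (⇑(Equiv.swap i j)) p * X (Equiv.swap i j k) := by
        simp
      rcases eq_or_ne k i with rfl | hki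
      · refine ⟨p + g * X j, ?_⟩
        rw [hren, Equiv.swap_apply_left]
        linear_combination X j * hg
      rcases eq_or_ne k j with rfl | hkj
      · refine ⟨-p + g * X i, ?_⟩
        rw [hren, Equiv.swap_apply_right]
        linear_combination X i * hg
      · refine ⟨g * X k, ?_⟩
        rw [hren, Equiv.swap_apply_of_ne_of_ne hki hkj]
        linear_combination X k * hg
  obtain ⟨g, hg⟩ := hex
  exact ⟨g, hg, fun y hy => mul_left_cancel₀ hne (hy.trans hg.symm)⟩

/-- The divided-difference operator `Δ_{ij} = (xᵢ - xⱼ)⁻¹ (1 - s_{ij})`. -/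
def Delta (i j : Fin n) : Module.End F (MvPolynomial (Fin n) F) where
  toFun f :=
    if h : i ≠ j then (delta_existsUnique F i j h f).exists.choose else 0
  map_add' f g := by
    by_cases h : i ≠ j
    · simp only [dif_pos h]
      apply (delta_existsUnique F i j h (f + g)).unique
      · exact (delta_existsUnique F i j h (f + g)).exists.choose_spec
      · rw [mul_add, (delta_existsUnique F i j h f).exists.choose_spec,
          (delta_existsUnique F i j h g).exists.choose_spec, map_add]
        ring
    · simp [dif_neg h]
  map_smul' c f := by
    by_cases h : i ≠ j
    · simp only [dif_pos h, RingHom.id_apply]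
      apply (delta_existsUnique F i j h (c • f)).unique
      · exact (delta_existsUnique F i j h (c • f)).exists.choose_spec
      · rw [Algebra.mul_smul_comm, (delta_existsUnique F i j h f).exists.choose_spec,
          map_smul, smul_sub]
    · simp [dif_neg h]

/-- The Dunkl operator `Yᵢ = κ ∂ᵢ + Σ_{j ≠ i} Δ_{ij}`. -/
def Dunkl (κ : F) (i : Fin n) : Module.End F (MvPolynomial (Fin n) F) :=
  κ • (MvPolynomial.pderiv i).toLinearMap + ∑ j ∈ Finset.univ.erase i, Delta F i j

/-- The trigonometric Dunkl (Cherednik) operator `Uᵢ = xᵢ Yᵢ + Σ_{j < i} s_{ji}`. -/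
def Cher (κ : F) (i : Fin n) : Module.End F (MvPolynomial (Fin n) F) :=
  LinearMap.mulLeft F (X i) * Dunkl F κ i +
    ∑ j ∈ Finset.univ.filter (fun j => j < i), swapOp F j i

lemma Delta_spec (i j : Fin n) (h : i ≠ j) (f : MvPolynomial (Fin n) F) :
    (X i - X j) * Delta F i j f = f - MvPolynomial.rename (⇑(Equiv.swap i j)) f := by
  show (X i - X j) *
      (if h' : i ≠ j then (delta_existsUnique F i j h' f).exists.choose else 0) = _
  rw [dif_pos h]
  exact (delta_existsUnique F i j h f).exists.choose_spec

lemma Delta_eq (i j : Fin n) (h : i ≠ j) (f g : MvPolynomial (Fin n) F)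
    (hg : (X i - X j) * g = f - MvPolynomial.rename (⇑(Equiv.swap i j)) f) :
    Delta F i j f = g := by
  have hne : (X i - X j : MvPolynomial (Fin n) F) ≠ 0 :=
    sub_ne_zero_of_ne (fun h' => h (MvPolynomial.X_injective h'))
  exact mul_left_cancel₀ hne ((Delta_spec F i j h f).trans hg.symm)

lemma Delta_X_left (i j : Fin n) (h : i ≠ j) (f : MvPolynomial (Fin n) F) :
    Delta F i j (X i * f) =
      X i * Delta F i j f + MvPolynomial.rename (⇑(Equiv.swap i j)) f := by
  apply Delta_eq F i j h
  have hr : MvPolynomial.rename (⇑(Equiv.swap i j)) (X i * f) =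
      X j * MvPolynomial.rename (⇑(Equiv.swap i j)) f := by simp
  rw [hr]
  linear_combination X i * Delta_spec F i j h f

lemma Delta_X_right (i j : Fin n) (h : i ≠ j) (f : MvPolynomial (Fin n) F) :
    Delta F i j (X j * f) =
      X j * Delta F i j f - MvPolynomial.rename (⇑(Equiv.swap i j)) f := by
  apply Delta_eq F i j h
  have hr : MvPolynomial.rename (⇑(Equiv.swap i j)) (X j * f) =
      X i * MvPolynomial.rename (⇑(Equiv.swap i j)) f := by simp
  rw [hr]
  linear_combination X j * Delta_spec F i j h f

lemma Delta_X_other (i j k : Fin n) (h : i ≠ j) (hki : k ≠ i) (hkj : k ≠ j)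
    (f : MvPolynomial (Fin n) F) :
    Delta F i j (X k * f) = X k * Delta F i j f := by
  apply Delta_eq F i j h
  have hr : MvPolynomial.rename (⇑(Equiv.swap i j)) (X k * f) =
      X k * MvPolynomial.rename (⇑(Equiv.swap i j)) f := by
    simp [Equiv.swap_apply_of_ne_of_ne hki hkj]
  rw [hr]
  linear_combination X k * Delta_spec F i j h f

lemma Dunkl_apply (κ : F) (i : Fin n) (f : MvPolynomial (Fin n) F) :
    Dunkl F κ i f =
      κ • MvPolynomial.pderiv i f + ∑ j ∈ Finset.univ.erase i, Delta F i j f := by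
  simp [Dunkl]

lemma dunkl_comm_self (κ : F) (i : Fin n) (f : MvPolynomial (Fin n) F) :
    Dunkl F κ i (X i * f) = X i * Dunkl F κ i f + κ • f +
      ∑ j ∈ Finset.univ.erase i, MvPolynomial.rename (⇑(Equiv.swap i j)) f := by
  rw [Dunkl_apply, Dunkl_apply]
  have hsum : ∀ j ∈ Finset.univ.erase i,
      Delta F i j (X i * f) =
        X i * Delta F i j f + MvPolynomial.rename (⇑(Equiv.swap i j)) f :=
    fun j hj => Delta_X_left F i j (Ne.symm (Finset.mem_erase.1 hj).1) f
  rw [Finset.sum_congr rfl hsum, Finset.sum_add_distrib, pderiv_mul, pderiv_X_self,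
    one_mul, smul_eq_C_mul, smul_eq_C_mul, smul_eq_C_mul, ← Finset.mul_sum]
  ring

lemma dunkl_comm_other (κ : F) (i j : Fin n) (h : j ≠ i) (f : MvPolynomial (Fin n) F) :
    Dunkl F κ j (X i * f) = X i * Dunkl F κ j f -
      MvPolynomial.rename (⇑(Equiv.swap j i)) f := by
  have hmem : i ∈ Finset.univ.erase j := Finset.mem_erase.2 ⟨Ne.symm h, Finset.mem_univ i⟩
  rw [Dunkl_apply, Dunkl_apply, ← Finset.add_sum_erase _ _ hmem,
    ← Finset.add_sum_erase _ (fun k => Delta F j k f) hmem]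
  have hsum : ∀ k ∈ (Finset.univ.erase j).erase i,
      Delta F j k (X i * f) = X i * Delta F j k f := by
    intro k hk
    have hki : k ≠ i := (Finset.mem_erase.1 hk).1
    have hkj : k ≠ j := (Finset.mem_erase.1 (Finset.mem_erase.1 hk).2).1
    exact Delta_X_other F j k i hkj.symm h.symm hki.symm f
  rw [Finset.sum_congr rfl hsum, Delta_X_right F j i h f, pderiv_mul,
    pderiv_X_of_ne (Ne.symm h), zero_mul, zero_add, smul_eq_C_mul, smul_eq_C_mul,
    ← Finset.mul_sum]
  ring

/-- The operator `ω = Y₁ + ⋯ + Yₙ`. -/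
def omegaOp (κ : F) : Module.End F (MvPolynomial (Fin n) F) :=
  ∑ i : Fin n, Dunkl F κ i

lemma omega_comm (κ : F) (i : Fin n) (f : MvPolynomial (Fin n) F) :
    omegaOp F κ (X i * f) = X i * omegaOp F κ f + κ • f := by
  have h1 : omegaOp F κ (X i * f) = ∑ j, Dunkl F κ j (X i * f) := by
    simp [omegaOp]
  have h2 : X i * omegaOp F κ f = ∑ j, X i * Dunkl F κ j f := by
    simp [omegaOp, Finset.mul_sum]
  rw [h1, h2, ← Finset.add_sum_erase _ _ (Finset.mem_univ i),
    ← Finset.add_sum_erase _ (fun j => X i * Dunkl F κ j f) (Finset.mem_univ i),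
    dunkl_comm_self]
  have hsum : ∀ j ∈ Finset.univ.erase i,
      Dunkl F κ j (X i * f) = X i * Dunkl F κ j f -
        MvPolynomial.rename (⇑(Equiv.swap i j)) f := by
    intro j hj
    rw [dunkl_comm_other F κ i j (Finset.mem_erase.1 hj).1 f, Equiv.swap_comm]
  rw [Finset.sum_congr rfl hsum, Finset.sum_sub_distrib]
  abel

theorem stmt14 (n : ℕ) (hn : 2 ≤ n) (κ : F) :
    (∀ i : Fin n,
      omegaOp F κ * LinearMap.mulLeft F (X i) - LinearMap.mulLeft F (X i) * omegaOp F κ =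
        κ • (1 : Module.End F (MvPolynomial (Fin n) F))) ∧
    (∀ (i : Fin n) (p : ℕ), 1 ≤ p →
      omegaOp F κ ^ p * LinearMap.mulLeft F (X i) -
          LinearMap.mulLeft F (X i) * omegaOp F κ ^ p =
        (p : F) • κ • omegaOp F κ ^ (p - 1)) := by
  have key : ∀ i : Fin n,
      omegaOp F κ * LinearMap.mulLeft F (X i) - LinearMap.mulLeft F (X i) * omegaOp F κ =
        κ • (1 : Module.End F (MvPolynomial (Fin n) F)) := by
    intro i
    refine LinearMap.ext fun f => ?_
    simp only [LinearMap.sub_apply, Module.End.mul_apply, LinearMap.mulLeft_apply,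
      LinearMap.smul_apply, Module.End.one_apply]
    rw [omega_comm]
    abel
  refine ⟨key, ?_⟩
  intro i p hp
  set ω : Module.End F (MvPolynomial (Fin n) F) := omegaOp F κ with hω
  set x : Module.End F (MvPolynomial (Fin n) F) := LinearMap.mulLeft F (X i) with hx
  have hc : ω * x - x * ω = κ • 1 := key i
  induction p with
  | zero => exact absurd hp (by omega)
  | succ q ih =>
    rcases Nat.eq_zero_or_pos q with rfl | hq
    · simpa using hc
    · have ihq := ih hq
      have hq' : q - 1 + 1 = q := Nat.succ_pred_eq_of_pos hq
      have e1 : ω ^ (q + 1) = ω * ω ^ q := pow_succ' ω q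
      have step : ω ^ (q + 1) * x - x * ω ^ (q + 1) =
          ω * (ω ^ q * x - x * ω ^ q) + (ω * x - x * ω) * ω ^ q := by
        rw [e1]; simp only [mul_sub, sub_mul, mul_assoc]; abel
      rw [step, ihq, hc]
      have e2 : ω * ((q : F) • κ • ω ^ (q - 1)) = (q : F) • κ • ω ^ q := by
        rw [mul_smul_comm, mul_smul_comm, ← pow_succ' ω (q - 1), hq']
      rw [e2]
      have hcast : ((q + 1 : ℕ) : F) = (q : F) + 1 := by push_cast; ring
      rw [hcast, Nat.add_sub_cancel, add_smul, one_smul, smul_mul_assoc, one_mul]
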